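/- arXiv:1305.4332 — 3 statements merged into one kernel-verified Lean document; each statement's English description precedes it below -/
import Mathlib

section
/- Let α > 0, p > 1 with 0 < αp < N, and let μ be a nonnegative Radon measure on ℝ^N with ||M_{αp,R}^{(p-1)(β-1)/β}[μ]||_{L^∞} ≤ 2 for some β ≥ 1 and supp μ ⊂ B_R with μ(B_R) ≤ C_0. Then there is a constant c depending on N, α, p, β, C_0, R such that for all t ∈ (0,1) and all x ∈ ℝ^N, the tail Wolff potential satisfies L_{α,p}^{2t}[μ](x) ≤ c (−\ln(t/2))^{1/β}. -/
open MeasureTheory ENNReal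

/-- The weight `h_η(t) = (-ln t)^{-η}` for `t ≤ 1/2` and `(ln 2)^{-η}` for `t ≥ 1/2`. -/
noncomputable def hfun (η t : ℝ) : ℝ :=
  if t ≤ 1 / 2 then (-Real.log t) ^ (-η) else (Real.log 2) ^ (-η)

/-- The lower (tail) Wolff potential
`L_{α,p}^s[μ](x) = ∫_s^∞ (μ(B_r(x))/r^{N-αp})^{1/(p-1)} dr/r`. -/
noncomputable def lowerWolff (N : ℕ) (α p s : ℝ)
    (μ : Measure (EuclideanSpace ℝ (Fin N))) (x : EuclideanSpace ℝ (Fin N)) : ℝ≥0∞ :=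
  ∫⁻ r in Set.Ioi s,
    (μ (Metric.ball x r) / ENNReal.ofReal (r ^ ((N : ℝ) - α * p))) ^ (1 / (p - 1)) *
      ENNReal.ofReal r⁻¹

/-!
The potential decreases in its lower limit, so it suffices to bound it from `t/2`.
Split the tail integral at `a = min R (1/2)`. Beyond `a` the total mass `C₀` gives
`(μ(B_r)/r^{N-αp})^{1/(p-1)} ≤ C₀^{1/(p-1)} r^{-(N-αp)/(p-1)}`, whose integral against `dr/r`
over `(a, ∞)` is a constant. Below `a` the maximal bound turns the integrand into
`2^{1/(p-1)} (-ln r)^{1/β - 1} / r`, the derivative of `-β (-ln r)^{1/β}`, so the integral over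
`(s, a)` is at most `2^{1/(p-1)} β (-ln s)^{1/β}`. Since `-ln(t/2) ≥ ln 2`, the constant is
absorbed into a multiple of `(-ln(t/2))^{1/β}`.
-/

open Set

theorem hfun_of_le_half {η t : ℝ} (ht : t ≤ 1 / 2) : hfun η t = (-Real.log t) ^ (-η) :=
  if_pos ht

theorem log_two_le_neg_log_div_two {t : ℝ} (ht₀ : 0 < t) (ht₁ : t ≤ 1) :
    Real.log 2 ≤ -Real.log (t / 2) := by
  rw [← Real.log_inv, inv_div]
  exact Real.log_le_log two_pos ((le_div_iff₀ ht₀).2 (by linarith))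

theorem hasDerivAt_neg_mul_neg_log_rpow {β r : ℝ} (hβ : β ≠ 0) (hr₀ : 0 < r)
    (hr₁ : r < 1) :
    HasDerivAt (fun s => -β * (-Real.log s) ^ (1 / β))
      ((-Real.log r) ^ (1 / β - 1) * r⁻¹) r := by
  have hlog : 0 < -Real.log r := neg_pos.2 (Real.log_neg hr₀ hr₁)
  have h := (((Real.hasDerivAt_log hr₀.ne').neg).rpow_const (p := 1 / β)
    (Or.inl hlog.ne')).const_mul (-β)
  refine h.congr_deriv ?_
  simp only [Pi.neg_apply]
  field_simp

theorem lintegral_Ioc_neg_log_rpow_mul_inv_le {β s b : ℝ} (hβ : 0 < β) (hs : 0 < s)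
    (hb : b < 1) :
    ∫⁻ r in Ioc s b, ENNReal.ofReal ((-Real.log r) ^ (1 / β - 1) * r⁻¹) ≤
      ENNReal.ofReal (β * (-Real.log s) ^ (1 / β)) := by
  rcases le_or_gt b s with hbs | hsb
  · simp [Ioc_eq_empty_of_le hbs]
  set F := fun r : ℝ => -β * (-Real.log r) ^ (1 / β)
  have hF : ∀ r ∈ Icc s b, HasDerivAt F ((-Real.log r) ^ (1 / β - 1) * r⁻¹) r :=
    fun r hr => hasDerivAt_neg_mul_neg_log_rpow hβ.ne' (hs.trans_le hr.1) (hr.2.trans_lt hb)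
  have hcont : ContinuousOn F (Icc s b) :=
    fun r hr => (hF r hr).continuousAt.continuousWithinAt
  have hderiv : ∀ r ∈ Ioo s b, HasDerivAt F ((-Real.log r) ^ (1 / β - 1) * r⁻¹) r :=
    fun r hr => hF r (Ioo_subset_Icc_self hr)
  have hnonneg : ∀ r ∈ Ioc s b, 0 ≤ (-Real.log r) ^ (1 / β - 1) * r⁻¹ := fun r hr => by
    have hr₀ : 0 < r := hs.trans hr.1
    have := neg_pos.2 (Real.log_neg hr₀ (hr.2.trans_lt hb))
    positivity
  have hint := intervalIntegral.integrableOn_deriv_of_nonneg hcont hderiv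
    fun r hr => hnonneg r (Ioo_subset_Ioc_self hr)
  rw [← ofReal_integral_eq_lintegral_ofReal hint
      (ae_restrict_of_forall_mem measurableSet_Ioc hnonneg),
    ← intervalIntegral.integral_of_le hsb.le,
    intervalIntegral.integral_eq_sub_of_hasDerivAt_of_le hsb.le hcont hderiv
      ((intervalIntegrable_iff_integrableOn_Ioc_of_le hsb.le).2 hint)]
  have hb_term : 0 ≤ β * (-Real.log b) ^ (1 / β) :=
    mul_nonneg hβ.le (Real.rpow_nonneg (neg_nonneg.2 (Real.log_nonpos (hs.trans hsb).le hb.le)) _)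
  exact ENNReal.ofReal_le_ofReal (by simp only [F]; linarith)

theorem lintegral_Ioi_rpow_neg_sub_one {a q : ℝ} (ha : 0 < a) (hq : 0 < q) :
    ∫⁻ r in Ioi a, ENNReal.ofReal (r ^ (-q - 1)) = ENNReal.ofReal (a ^ (-q) / q) := by
  rw [← ofReal_integral_eq_lintegral_ofReal (integrableOn_Ioi_rpow_of_lt (by linarith) ha)
      (ae_restrict_of_forall_mem measurableSet_Ioi fun r hr => Real.rpow_nonneg (ha.trans hr).le _),
    integral_Ioi_rpow_of_lt (by linarith) ha, show -q - 1 + 1 = -q by ring, neg_div_neg_eq]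

/-- The integrand of the lower Wolff potential, for the radial profile `m r = μ (B_r(x))`,
`κ = N - αp` and `e = 1/(p-1)`. -/
noncomputable def wolffIntegrand (κ e : ℝ) (m : ℝ → ℝ≥0∞) (r : ℝ) : ℝ≥0∞ :=
  (m r / ENNReal.ofReal (r ^ κ)) ^ e * ENNReal.ofReal r⁻¹

theorem lowerWolff_eq_lintegral_wolffIntegrand (N : ℕ) (α p s : ℝ)
    (μ : Measure (EuclideanSpace ℝ (Fin N))) (x : EuclideanSpace ℝ (Fin N)) :
    lowerWolff N α p s μ x =
      ∫⁻ r in Ioi s, wolffIntegrand ((N : ℝ) - α * p) (1 / (p - 1))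
        (fun r => μ (Metric.ball x r)) r :=
  rfl

theorem lowerWolff_antitone (N : ℕ) (α p : ℝ) (μ : Measure (EuclideanSpace ℝ (Fin N)))
    (x : EuclideanSpace ℝ (Fin N)) : Antitone fun s => lowerWolff N α p s μ x :=
  fun _ _ hst => lintegral_mono_set (Ioi_subset_Ioi hst)

section wolffIntegrand

variable {κ e : ℝ} {m : ℝ → ℝ≥0∞}

theorem wolffIntegrand_le {A r : ℝ} (hr : 0 < r) (hA : 0 ≤ A) (he : 0 ≤ e)
    (hm : m r ≤ ENNReal.ofReal (A * r ^ κ)) :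
    wolffIntegrand κ e m r ≤ ENNReal.ofReal (A ^ e * r⁻¹) := by
  have hρ : 0 < r ^ κ := Real.rpow_pos_of_pos hr κ
  have hratio : m r / ENNReal.ofReal (r ^ κ) ≤ ENNReal.ofReal A := by
    calc m r / ENNReal.ofReal (r ^ κ) ≤ ENNReal.ofReal (A * r ^ κ) / ENNReal.ofReal (r ^ κ) :=
          ENNReal.div_le_div_right hm _
      _ = ENNReal.ofReal A := by
          rw [← ENNReal.ofReal_div_of_pos hρ, mul_div_cancel_right₀ _ hρ.ne']
  rw [wolffIntegrand, ENNReal.ofReal_mul (Real.rpow_nonneg hA e),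
    ← ENNReal.ofReal_rpow_of_nonneg hA he]
  gcongr

theorem lintegral_Ioi_wolffIntegrand_le {a C : ℝ} (ha : 0 < a) (he : 0 ≤ e) (hκe : 0 < κ * e)
    (hC : 0 ≤ C) (hm : ∀ r, a < r → m r ≤ ENNReal.ofReal C) :
    ∫⁻ r in Ioi a, wolffIntegrand κ e m r ≤
      ENNReal.ofReal (C ^ e * (a ^ (-(κ * e)) / (κ * e))) := by
  have hCe : 0 ≤ C ^ e := Real.rpow_nonneg hC e
  calc ∫⁻ r in Ioi a, wolffIntegrand κ e m r
      ≤ ∫⁻ r in Ioi a, ENNReal.ofReal (C ^ e) * ENNReal.ofReal (r ^ (-(κ * e) - 1)) := by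
        refine setLIntegral_mono' measurableSet_Ioi fun r hr => ?_
        have hr₀ : 0 < r := ha.trans hr
        have hmass : m r ≤ ENNReal.ofReal (C * r ^ (-κ) * r ^ κ) := by
          rw [mul_assoc, ← Real.rpow_add hr₀, neg_add_cancel, Real.rpow_zero, mul_one]
          exact hm r hr
        refine (wolffIntegrand_le hr₀ (by positivity) he hmass).trans_eq ?_
        rw [← ENNReal.ofReal_mul hCe, Real.mul_rpow hC (Real.rpow_nonneg hr₀.le _),
          ← Real.rpow_mul hr₀.le, Real.rpow_sub hr₀, Real.rpow_one, neg_mul]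
        ring_nf
    _ = ENNReal.ofReal (C ^ e * (a ^ (-(κ * e)) / (κ * e))) := by
        rw [lintegral_const_mul' _ _ ofReal_ne_top, lintegral_Ioi_rpow_neg_sub_one ha hκe,
          ← ENNReal.ofReal_mul hCe]

theorem lintegral_Ioc_wolffIntegrand_le {η β A s b : ℝ} (hβ : 0 < β) (hs : 0 < s) (hb : b < 1)
    (he : 0 ≤ e) (hηe : η * e = 1 - 1 / β) (hA : 0 ≤ A)
    (hm : ∀ r ∈ Ioc s b, m r ≤ ENNReal.ofReal (A * r ^ κ * (-Real.log r) ^ (-η))) :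
    ∫⁻ r in Ioc s b, wolffIntegrand κ e m r ≤
      ENNReal.ofReal (A ^ e * (β * (-Real.log s) ^ (1 / β))) := by
  have hAe : 0 ≤ A ^ e := Real.rpow_nonneg hA e
  calc ∫⁻ r in Ioc s b, wolffIntegrand κ e m r
      ≤ ∫⁻ r in Ioc s b,
          ENNReal.ofReal (A ^ e) * ENNReal.ofReal ((-Real.log r) ^ (1 / β - 1) * r⁻¹) := by
        refine setLIntegral_mono' measurableSet_Ioc fun r hr => ?_
        have hr₀ : 0 < r := hs.trans hr.1
        have hlog : 0 < -Real.log r := neg_pos.2 (Real.log_neg hr₀ (hr.2.trans_lt hb))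
        have hmass : m r ≤ ENNReal.ofReal (A * (-Real.log r) ^ (-η) * r ^ κ) := by
          rw [mul_right_comm]; exact hm r hr
        refine (wolffIntegrand_le hr₀ (by positivity) he hmass).trans_eq ?_
        rw [← ENNReal.ofReal_mul hAe, Real.mul_rpow hA (Real.rpow_nonneg hlog.le _),
          ← Real.rpow_mul hlog.le, neg_mul, hηe, neg_sub, mul_assoc]
    _ ≤ ENNReal.ofReal (A ^ e) * ENNReal.ofReal (β * (-Real.log s) ^ (1 / β)) := by
        rw [lintegral_const_mul' _ _ ofReal_ne_top]
        gcongr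
        exact lintegral_Ioc_neg_log_rpow_mul_inv_le hβ hs hb
    _ = ENNReal.ofReal (A ^ e * (β * (-Real.log s) ^ (1 / β))) :=
        (ENNReal.ofReal_mul hAe).symm

end wolffIntegrand

theorem lowerWolff_le_of_ball_le {N : ℕ} {α p β a C s : ℝ}
    {μ : Measure (EuclideanSpace ℝ (Fin N))} {x : EuclideanSpace ℝ (Fin N)} (hp : 1 < p)
    (hαp : α * p < N) (hβ : 0 < β) (ha : 0 < a) (ha₂ : a ≤ 1 / 2) (hC : 0 ≤ C)
    (hs : 0 < s)
    (hM : ∀ t, 0 < t → t ≤ a →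
      μ (Metric.ball x t) ≤
        ENNReal.ofReal (2 * t ^ ((N : ℝ) - α * p) * hfun ((p - 1) * (β - 1) / β) t))
    (hμ : μ univ ≤ ENNReal.ofReal C) :
    lowerWolff N α p s μ x ≤
      ENNReal.ofReal (2 ^ (1 / (p - 1)) * (β * (-Real.log s) ^ (1 / β))) +
        ENNReal.ofReal (C ^ (1 / (p - 1)) * (a ^ (-(((N : ℝ) - α * p) * (1 / (p - 1)))) /
          (((N : ℝ) - α * p) * (1 / (p - 1))))) := by
  have he : 0 < 1 / (p - 1) := one_div_pos.2 (sub_pos.2 hp)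
  have hκe : 0 < ((N : ℝ) - α * p) * (1 / (p - 1)) := mul_pos (sub_pos.2 hαp) he
  have hsplit : Ioi s ⊆ Ioc s a ∪ Ioi a := fun r hr =>
    (le_or_gt r a).imp (fun hra => ⟨hr, hra⟩) id
  rw [lowerWolff_eq_lintegral_wolffIntegrand]
  refine (lintegral_mono_set hsplit).trans ((lintegral_union_le _ _ _).trans (add_le_add ?_ ?_))
  · refine lintegral_Ioc_wolffIntegrand_le (η := (p - 1) * (β - 1) / β) hβ hs
      (ha₂.trans_lt (by norm_num)) he.le (by field_simp [(sub_pos.2 hp).ne', hβ.ne'])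
      zero_le_two fun r hr => ?_
    rw [← hfun_of_le_half (hr.2.trans ha₂)]
    exact hM r (hs.trans hr.1) hr.2
  · exact lintegral_Ioi_wolffIntegrand_le ha he.le hκe hC
      fun r _ => (measure_mono (subset_univ _)).trans hμ

theorem lowerWolff_log_bound_general (N : ℕ) (α p β R C₀ : ℝ) (hp : 1 < p)
    (hαp : α * p < N) (hβ : 1 ≤ β) (hR : 0 < R) (hC₀ : 0 < C₀)
    (μ : Measure (EuclideanSpace ℝ (Fin N)))
    (hM : ∀ (x : EuclideanSpace ℝ (Fin N)) (t : ℝ), 0 < t → t ≤ R →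
      μ (Metric.ball x t) ≤
        ENNReal.ofReal (2 * t ^ ((N : ℝ) - α * p) * hfun ((p - 1) * (β - 1) / β) t))
    (hsupp : μ (Metric.ball (0 : EuclideanSpace ℝ (Fin N)) R)ᶜ = 0)
    (hfin : μ (Metric.ball (0 : EuclideanSpace ℝ (Fin N)) R) ≤ ENNReal.ofReal C₀) :
    ∃ c : ℝ, 0 < c ∧ ∀ t : ℝ, 0 < t → t < 1 → ∀ x : EuclideanSpace ℝ (Fin N),
      lowerWolff N α p (2 * t) μ x ≤
        ENNReal.ofReal (c * (-Real.log (t / 2)) ^ (1 / β)) := by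
  have hβ₀ : 0 < β := zero_lt_one.trans_le hβ
  have ha : 0 < min R (1 / 2) := lt_min hR (by norm_num)
  have hμ : μ univ ≤ ENNReal.ofReal C₀ := by
    simpa [hsupp] using (measure_univ_le_add_compl _).trans (add_le_add_left hfin _)
  set B := (2 : ℝ) ^ (1 / (p - 1)) * β
  set K := C₀ ^ (1 / (p - 1)) * (min R (1 / 2) ^ (-(((N : ℝ) - α * p) * (1 / (p - 1)))) /
    (((N : ℝ) - α * p) * (1 / (p - 1))))
  have hK : 0 ≤ K := by
    have := sub_pos.2 hαp; have := sub_pos.2 hp; positivity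
  have hL : 0 < Real.log 2 ^ (1 / β) := Real.rpow_pos_of_pos (Real.log_pos one_lt_two) _
  refine ⟨B + K / Real.log 2 ^ (1 / β), by positivity, fun t ht₀ ht₁ x => ?_⟩
  set X := (-Real.log (t / 2)) ^ (1 / β)
  have hX : Real.log 2 ^ (1 / β) ≤ X := Real.rpow_le_rpow (Real.log_pos one_lt_two).le
    (log_two_le_neg_log_div_two ht₀ ht₁.le) (by positivity)
  have hKX : K ≤ K / Real.log 2 ^ (1 / β) * X := by
    rw [div_mul_eq_mul_div, le_div_iff₀ hL]; exact mul_le_mul_of_nonneg_left hX hK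
  calc lowerWolff N α p (2 * t) μ x ≤ lowerWolff N α p (t / 2) μ x :=
        lowerWolff_antitone N α p μ x (by linarith)
    _ ≤ ENNReal.ofReal (B * X) + ENNReal.ofReal K := by
        rw [mul_assoc]
        exact lowerWolff_le_of_ball_le hp hαp hβ₀ ha (min_le_right _ _) hC₀.le (by linarith)
          (fun r hr₀ hra => hM x r hr₀ (hra.trans (min_le_left _ _))) hμ
    _ ≤ ENNReal.ofReal ((B + K / Real.log 2 ^ (1 / β)) * X) := by
        rw [← ENNReal.ofReal_add (mul_nonneg (by positivity) (hL.le.trans hX)) hK]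
        exact ENNReal.ofReal_le_ofReal (by rw [add_mul]; linarith)

theorem lowerWolff_log_bound (N : ℕ) (α p β R C₀ : ℝ) (hα : 0 < α) (hp : 1 < p)
    (hαp : α * p < N) (hβ : 1 ≤ β) (hR : 0 < R) (hC₀ : 0 < C₀)
    (μ : Measure (EuclideanSpace ℝ (Fin N)))
    (hM : ∀ (x : EuclideanSpace ℝ (Fin N)) (t : ℝ), 0 < t → t ≤ R →
      μ (Metric.ball x t) ≤
        ENNReal.ofReal (2 * t ^ ((N : ℝ) - α * p) * hfun ((p - 1) * (β - 1) / β) t))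
    (hsupp : μ (Metric.ball (0 : EuclideanSpace ℝ (Fin N)) R)ᶜ = 0)
    (hfin : μ (Metric.ball (0 : EuclideanSpace ℝ (Fin N)) R) ≤ ENNReal.ofReal C₀) :
    ∃ c : ℝ, 0 < c ∧ ∀ t : ℝ, 0 < t → t < 1 → ∀ x : EuclideanSpace ℝ (Fin N),
      lowerWolff N α p (2 * t) μ x ≤
        ENNReal.ofReal (c * (-Real.log (t / 2)) ^ (1 / β)) :=
  lowerWolff_log_bound_general N α p β R C₀ hp hαp hβ hR hC₀ μ hM hsupp hfin
end

section
/- Let q > p - 1 > 0, 1 < p < N, and suppose u is a nonnegative Borel function on ℝ^N, locally integrable to the power q, and μ a nonnegative Radon measure, such that u(x) ≥ c (∫_0^∞ ((∫_{B_t(x)} u^q dy + μ(B_t(x)))/t^{N-p})^{1/(p-1)} dt/t) for all x and some c > 0. If moreover N ≤ pq/(q-p+1), then u ≡ 0 and μ ≡ 0. -/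
open MeasureTheory ENNReal
open Metric Set

/-!
Write `ν = u^q dx + μ` and `s = (N - p) q / (p - 1)`, so that the dimension condition reads
`s ≤ N`. Averaging the Wolff integrand over `t ∈ (T, 2T)` shows
`u(x) ≥ (c/2) (ν(S) / (2T)^(N-p))^(1/(p-1))` for every set `S ⊆ ball x T`.
Applied at the points of a ball `B_R` with `R ≥ 1`, this gives
`ν(B_R) ≥ ∫_{B_R} u^q ≳ ν(B_R)^(q/(p-1)) R^(N-s)`, and since `q/(p-1) > 1` and `N - s ≥ 0`,
`ν(B_R)` is bounded independently of `R`: `ν` is finite. Applied to a fixed ball `B_R` of positive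
mass and an arbitrary `x`, it gives `u(x)^q ≳ (|x| + R)^(-s)`, which is not integrable because
`s ≤ N`, contradicting `∫ u^q ≤ ν(ℝ^N) < ∞`. Hence `ν = 0`.
-/

noncomputable def wolffPotential {E : Type*} [PseudoMetricSpace E] [MeasurableSpace E]
    (ν : Measure E) (N p : ℝ) (x : E) : ℝ≥0∞ :=
  ∫⁻ t in Ioi (0 : ℝ), (ν (ball x t) / ENNReal.ofReal (t ^ (N - p))) ^ (1 / (p - 1)) *
    ENNReal.ofReal t⁻¹

section Wolff

variable {E : Type*} [PseudoMetricSpace E] [MeasurableSpace E] {ν : Measure E} {N p : ℝ}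
  {x : E}

theorem le_wolffPotential (hp : 1 < p) (hpN : p ≤ N) {T : ℝ} (hT : 0 < T) :
    (ν (ball x T) / ENNReal.ofReal ((2 * T) ^ (N - p))) ^ (1 / (p - 1)) / 2 ≤
      wolffPotential ν N p x := by
  set K := (ν (ball x T) / ENNReal.ofReal ((2 * T) ^ (N - p))) ^ (1 / (p - 1))
  calc K / 2 = ∫⁻ _ in Ioo T (2 * T), K * ENNReal.ofReal (2 * T)⁻¹ := by
        rw [setLIntegral_const, Real.volume_Ioo, mul_assoc, ← ENNReal.ofReal_mul (by positivity),
          show (2 * T)⁻¹ * (2 * T - T) = 2⁻¹ by field_simp; ring, ENNReal.ofReal_inv_of_pos two_pos,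
          ENNReal.ofReal_ofNat, div_eq_mul_inv]
    _ ≤ ∫⁻ t in Ioo T (2 * T), (ν (ball x t) / ENNReal.ofReal (t ^ (N - p))) ^ (1 / (p - 1)) *
          ENNReal.ofReal t⁻¹ := by
        refine setLIntegral_mono' measurableSet_Ioo fun t ⟨hTt, ht2T⟩ => ?_
        have ht : 0 < t := hT.trans hTt
        unfold K
        gcongr
    _ ≤ wolffPotential ν N p x :=
        lintegral_mono_set (Ioo_subset_Ioi_self.trans (Ioi_subset_Ioi hT.le))

theorem measure_ball_ne_top_of_wolffPotential_le {c a T : ℝ} (hp : 1 < p) (hpN : p ≤ N)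
    (hc : 0 < c) (hT : 0 < T)
    (h : ENNReal.ofReal c * wolffPotential ν N p x ≤ ENNReal.ofReal a) : ν (ball x T) ≠ ⊤ := by
  intro htop
  have hW := le_wolffPotential (ν := ν) (x := x) hp hpN hT
  rw [htop, top_div_of_ne_top ofReal_ne_top, top_rpow_of_pos (by rw [one_div_pos]; linarith),
    top_div_of_ne_top ofNat_ne_top, top_le_iff] at hW
  rw [hW, mul_top (by simpa using hc)] at h
  exact ofReal_ne_top (top_le_iff.mp h)

theorem le_of_wolffPotential_le {c a T : ℝ} {S : Set E} (hp : 1 < p) (hpN : p ≤ N)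
    (hc : 0 ≤ c) (ha : 0 ≤ a) (hT : 0 < T) (hS : S ⊆ ball x T)
    (h : ENNReal.ofReal c * wolffPotential ν N p x ≤ ENNReal.ofReal a) :
    c / 2 * ((ν S).toReal / (2 * T) ^ (N - p)) ^ (1 / (p - 1)) ≤ a := by
  have hhalf : ENNReal.ofReal c * ((ν S / ENNReal.ofReal ((2 * T) ^ (N - p))) ^ (1 / (p - 1)) / 2)
      ≤ ENNReal.ofReal a := by
    refine le_trans ?_ h
    gcongr
    exact le_trans (by gcongr) (le_wolffPotential hp hpN hT)
  have hreal := toReal_mono ofReal_ne_top hhalf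
  rw [toReal_mul, toReal_div, ← toReal_rpow, toReal_div, toReal_ofReal hc, toReal_ofReal ha,
    toReal_ofReal (by positivity), toReal_ofNat] at hreal
  linarith

theorem rpow_le_of_wolffPotential_le {c a q T : ℝ} {S : Set E} (hp : 1 < p) (hpN : p ≤ N)
    (hq : 0 ≤ q) (hc : 0 ≤ c) (ha : 0 ≤ a) (hT : 0 < T) (hS : S ⊆ ball x T)
    (h : ENNReal.ofReal c * wolffPotential ν N p x ≤ ENNReal.ofReal a) :
    (c / 2) ^ q * (ν S).toReal ^ (q / (p - 1)) * (2 * T) ^ (-((N - p) * (q / (p - 1)))) ≤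
      a ^ q := by
  have h2T : 0 < 2 * T := by positivity
  calc (c / 2) ^ q * (ν S).toReal ^ (q / (p - 1)) * (2 * T) ^ (-((N - p) * (q / (p - 1))))
      = (c / 2 * ((ν S).toReal / (2 * T) ^ (N - p)) ^ (1 / (p - 1))) ^ q := by
        symm
        rw [Real.mul_rpow (by positivity) (by positivity), ← Real.rpow_mul (by positivity),
          one_div_mul_eq_div, Real.div_rpow (x := (ν S).toReal) (by positivity) (by positivity),
          ← Real.rpow_mul h2T.le, Real.rpow_neg h2T.le]
        ring
    _ ≤ a ^ q := by gcongr; exact le_of_wolffPotential_le hp hpN hc ha hT hS h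

end Wolff

theorem le_inv_rpow_of_mul_rpow_le {κ β M : ℝ} (hκ : 0 < κ) (hβ : 1 < β) (hM : 0 ≤ M)
    (h : κ * M ^ β ≤ M) : M ≤ κ⁻¹ ^ (β - 1)⁻¹ := by
  rcases hM.eq_or_lt with rfl | hM
  · positivity
  have hβ1 : 0 < β - 1 := by linarith
  have hpow : M ^ (β - 1) ≤ κ⁻¹ := by
    have hM' : κ * M ^ (β - 1) * M ≤ 1 * M := by
      rwa [mul_assoc, ← Real.rpow_add_one hM.ne', sub_add_cancel, one_mul]
    rw [← one_div, le_div_iff₀ hκ, mul_comm]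
    exact le_of_mul_le_mul_right hM' hM
  calc M = (M ^ (β - 1)) ^ (β - 1)⁻¹ := by
        rw [← Real.rpow_mul hM.le, mul_inv_cancel₀ hβ1.ne', Real.rpow_one]
    _ ≤ κ⁻¹ ^ (β - 1)⁻¹ := by gcongr

theorem not_integrable_rpow_neg_norm_add {E : Type*} [NormedAddCommGroup E] [NormedSpace ℝ E]
    [FiniteDimensional ℝ E] [Nontrivial E] [MeasurableSpace E] [BorelSpace E] (μ : Measure E)
    [μ.IsAddHaarMeasure] {R s : ℝ} (hR : 0 < R) (hs₀ : 0 ≤ s) (hs : s ≤ Module.finrank ℝ E) :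
    ¬ Integrable (fun x : E => (‖x‖ + R) ^ (-s)) μ := by
  set d := Module.finrank ℝ E
  have hd : 1 ≤ d := Module.finrank_pos
  rw [integrable_fun_norm_addHaar μ (f := fun y => (y + R) ^ (-s))]
  intro h
  have hpow : IntegrableOn (fun y : ℝ => y ^ ((d : ℝ) - 1 - s)) (Ioi R) := by
    refine ((h.mono_set (Ioi_subset_Ioi hR.le)).const_mul (2 ^ s)).mono'
      (by fun_prop) (ae_restrict_of_forall_mem measurableSet_Ioi fun y (hy : R < y) => ?_)
    have hy0 : 0 < y := hR.trans hy
    have hexp : (d : ℝ) - 1 - s = ((d - 1 : ℕ) : ℝ) + -s := by push_cast [Nat.cast_sub hd]; ring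
    rw [Real.norm_of_nonneg (by positivity), smul_eq_mul, hexp, Real.rpow_add hy0,
      Real.rpow_natCast]
    calc y ^ (d - 1) * y ^ (-s) = 2 ^ s * (y ^ (d - 1) * (2 * y) ^ (-s)) := by
          rw [Real.mul_rpow two_pos.le hy0.le, Real.rpow_neg two_pos.le]
          field_simp
      _ ≤ 2 ^ s * (y ^ (d - 1) * (y + R) ^ (-s)) := by
          have h2y := Real.rpow_le_rpow_of_nonpos (by positivity : 0 < y + R)
            (by linarith : y + R ≤ 2 * y) (neg_nonpos.mpr hs₀)
          gcongr ?_ * (_ * ?_)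
  have := (integrableOn_Ioi_rpow_iff hR).mp hpow
  linarith

section Liouville

variable {E : Type*} [NormedAddCommGroup E] [NormedSpace ℝ E] [FiniteDimensional ℝ E]
  [Nontrivial E] [MeasureSpace E] [BorelSpace E] [(volume : Measure E).IsAddHaarMeasure]
  {ν : Measure E} {u : E → ℝ} {N p q c : ℝ}

theorem isFiniteMeasure_of_wolffPotential_le (hp : 1 < p) (hpN : p ≤ N) (hq : p - 1 < q)
    (hc : 0 < c) (hdim : (N - p) * (q / (p - 1)) ≤ Module.finrank ℝ E) (hu : ∀ x, 0 ≤ u x)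
    (hν : volume.withDensity (fun y => ENNReal.ofReal (u y ^ q)) ≤ ν)
    (hW : ∀ x, ENNReal.ofReal c * wolffPotential ν N p x ≤ ENNReal.ofReal (u x)) :
    IsFiniteMeasure ν := by
  set β := q / (p - 1)
  set s := (N - p) * β
  set d := Module.finrank ℝ E
  have hβ : 1 < β := (one_lt_div (by linarith)).mpr (by linarith)
  set v := (volume (ball (0 : E) 1)).toReal
  have hv : 0 < v := toReal_pos (measure_ball_pos _ _ one_pos).ne' measure_ball_lt_top.ne
  set κ := (c / 2) ^ q * 4 ^ (-s) * v
  have hball : ∀ R : ℝ, 1 ≤ R → ν (ball 0 R) ≤ ENNReal.ofReal (κ⁻¹ ^ (β - 1)⁻¹) := by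
    intro R hR
    have hR0 : 0 < R := by linarith
    set M := (ν (ball (0 : E) R)).toReal
    have hfin : ν (ball 0 R) ≠ ⊤ :=
      measure_ball_ne_top_of_wolffPotential_le hp hpN hc hR0 (hW 0)
    have hlow : ∀ x ∈ ball (0 : E) R, ENNReal.ofReal ((c / 2) ^ q * M ^ β * (4 * R) ^ (-s)) ≤
        ENNReal.ofReal (u x ^ q) := fun x hx => by
      refine ofReal_le_ofReal ?_
      have hsub : ball (0 : E) R ⊆ ball x (2 * R) := ball_subset_ball' (by
        rw [dist_comm, dist_zero_right]; rw [mem_ball_zero_iff] at hx; linarith)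
      simpa only [show 2 * (2 * R) = 4 * R by ring] using
        rpow_le_of_wolffPotential_le hp hpN (by linarith) hc.le (hu x) (by linarith) hsub (hW x)
    have hmass : ENNReal.ofReal ((c / 2) ^ q * M ^ β * (4 * R) ^ (-s) * (R ^ d * v)) ≤
        ENNReal.ofReal M := calc
      _ = ∫⁻ _ in ball (0 : E) R, ENNReal.ofReal ((c / 2) ^ q * M ^ β * (4 * R) ^ (-s)) := by
        rw [setLIntegral_const, Measure.addHaar_ball _ _ hR0.le, ← ofReal_toReal
          (measure_ball_lt_top (x := (0 : E)) (r := 1)).ne, ← ofReal_mul (by positivity),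
          ← ofReal_mul (by positivity)]
      _ ≤ ∫⁻ x in ball (0 : E) R, ENNReal.ofReal (u x ^ q) :=
        setLIntegral_mono' measurableSet_ball hlow
      _ ≤ ν (ball 0 R) := (withDensity_apply _ measurableSet_ball).symm.trans_le (hν _)
      _ = ENNReal.ofReal M := (ofReal_toReal hfin).symm
    have hbootstrap : κ * M ^ β ≤ M := calc
      κ * M ^ β ≤ κ * M ^ β * R ^ ((d : ℝ) - s) :=
        le_mul_of_one_le_right (by positivity) (Real.one_le_rpow hR (by linarith))
      _ = (c / 2) ^ q * M ^ β * (4 * R) ^ (-s) * (R ^ d * v) := by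
        rw [Real.mul_rpow (by norm_num) hR0.le, Real.rpow_sub hR0, Real.rpow_natCast,
          Real.rpow_neg hR0.le]
        field_simp
        ring
      _ ≤ M := (ofReal_le_ofReal_iff toReal_nonneg).mp hmass
    rw [← ofReal_toReal hfin]
    exact ofReal_le_ofReal (le_inv_rpow_of_mul_rpow_le (by positivity) hβ toReal_nonneg hbootstrap)
  refine ⟨?_⟩
  calc ν univ = ⨆ n : ℕ, ν (ball 0 (n + 1)) := by
        rw [← iUnion_ball_nat_succ (0 : E), Monotone.measure_iUnion]
        exact fun m n hmn => ball_subset_ball (by gcongr)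
    _ ≤ ENNReal.ofReal (κ⁻¹ ^ (β - 1)⁻¹) := iSup_le fun n => hball _ (by simp)
    _ < ⊤ := ofReal_lt_top

theorem eq_zero_of_wolffPotential_le [IsFiniteMeasure ν] (hp : 1 < p) (hpN : p ≤ N)
    (hq : 0 ≤ q) (hc : 0 < c) (hdim : (N - p) * (q / (p - 1)) ≤ Module.finrank ℝ E)
    (hu_meas : Measurable u) (hu : ∀ x, 0 ≤ u x)
    (hν : volume.withDensity (fun y => ENNReal.ofReal (u y ^ q)) ≤ ν)
    (hW : ∀ x, ENNReal.ofReal c * wolffPotential ν N p x ≤ ENNReal.ofReal (u x)) : ν = 0 := by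
  set s := (N - p) * (q / (p - 1))
  by_contra hne
  obtain ⟨n, hn⟩ : ∃ n : ℕ, ν (ball 0 (n + 1)) ≠ 0 := by
    by_contra! h
    exact hne (Measure.measure_univ_eq_zero.mp (by
      rw [← iUnion_ball_nat_succ (0 : E), measure_iUnion_null_iff]; exact h))
  set R : ℝ := n + 1
  have hR : 0 < R := by positivity
  have hM : 0 < (ν (ball 0 R)).toReal := toReal_pos hn (measure_ne_top _ _)
  set b := (c / 2) ^ q * (ν (ball 0 R)).toReal ^ (q / (p - 1)) * 2 ^ (-s)
  have hb : 0 < b := by positivity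
  have hlow : ∀ x, b * (‖x‖ + R) ^ (-s) ≤ u x ^ q := fun x => by
    have hsub : ball (0 : E) R ⊆ ball x (‖x‖ + R) :=
      ball_subset_ball' (by rw [dist_comm, dist_zero_right, add_comm])
    have := rpow_le_of_wolffPotential_le hp hpN hq hc.le (hu x) (by positivity) hsub (hW x)
    rwa [Real.mul_rpow two_pos.le (by positivity), ← mul_assoc] at this
  have hint : Integrable (fun x => u x ^ q) := by
    refine (lintegral_ofReal_ne_top_iff_integrable (by fun_prop)
      (ae_of_all _ fun x => Real.rpow_nonneg (hu x) q)).mp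
      (ne_top_of_le_ne_top (measure_ne_top ν univ) ?_)
    simpa only [withDensity_apply _ MeasurableSet.univ, Measure.restrict_univ] using hν univ
  have hs : 0 ≤ s := mul_nonneg (by linarith) (div_nonneg hq (by linarith))
  refine not_integrable_rpow_neg_norm_add volume hR hs hdim ((hint.const_mul b⁻¹).mono'
    (by fun_prop : Measurable _).aestronglyMeasurable (ae_of_all _ fun x => ?_))
  rw [Real.norm_of_nonneg (by positivity), le_inv_mul_iff₀ hb]
  exact hlow x

end Liouville

theorem liouville_wolff_supersolution_general (N : ℕ) (p q c : ℝ)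
    (hp : 1 < p) (hpN : p < N) (hq : p - 1 < q) (hc : 0 < c)
    (hdim : (N : ℝ) ≤ p * q / (q - p + 1))
    (u : EuclideanSpace ℝ (Fin N) → ℝ) (hu : Measurable u) (hupos : ∀ x, 0 ≤ u x)
    (μ : Measure (EuclideanSpace ℝ (Fin N)))
    (hsup : ∀ x : EuclideanSpace ℝ (Fin N),
      ENNReal.ofReal c *
        (∫⁻ t in Set.Ioi (0 : ℝ),
          (((∫⁻ y in Metric.ball x t, ENNReal.ofReal (u y ^ q)) + μ (Metric.ball x t)) /
              ENNReal.ofReal (t ^ ((N : ℝ) - p))) ^ (1 / (p - 1)) *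
            ENNReal.ofReal t⁻¹) ≤ ENNReal.ofReal (u x)) :
    (∀ᵐ x : EuclideanSpace ℝ (Fin N), u x = 0) ∧ μ = 0 := by
  have : Nontrivial (EuclideanSpace ℝ (Fin N)) := Module.nontrivial_of_finrank_pos
    (R := ℝ) (by rw [finrank_euclideanSpace_fin]; exact_mod_cast hp.trans hpN |>.trans' one_pos)
  have hdim' : ((N : ℝ) - p) * (q / (p - 1)) ≤ Module.finrank ℝ (EuclideanSpace ℝ (Fin N)) := by
    rw [finrank_euclideanSpace_fin, mul_div_assoc', div_le_iff₀ (by linarith)]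
    rw [le_div_iff₀ (by linarith)] at hdim
    linarith
  set g := fun y => ENNReal.ofReal (u y ^ q)
  set ν := volume.withDensity g + μ
  have hW : ∀ x, ENNReal.ofReal c * wolffPotential ν N p x ≤ ENNReal.ofReal (u x) := by
    simpa only [wolffPotential, ν, Measure.add_apply, withDensity_apply _ measurableSet_ball]
      using hsup
  have hν : volume.withDensity g ≤ ν := Measure.le_add_right le_rfl
  have := isFiniteMeasure_of_wolffPotential_le hp hpN.le hq hc hdim' hupos hν hW
  have hν0 := eq_zero_of_wolffPotential_le hp hpN.le (by linarith) hc hdim' hu hupos hν hW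
  have hg : volume.withDensity g = 0 := Measure.nonpos_iff_eq_zero'.mp (hν0 ▸ hν)
  refine ⟨?_, Measure.nonpos_iff_eq_zero'.mp (hν0 ▸ Measure.le_add_left le_rfl)⟩
  filter_upwards [(withDensity_eq_zero_iff (by fun_prop)).mp hg] with x hx
  refine (Real.rpow_eq_zero (hupos x) (by linarith)).mp
    (le_antisymm ?_ (Real.rpow_nonneg (hupos x) q))
  simpa [g] using hx

/-- Liouville-type result: a nonnegative supersolution bound by the Wolff potential of
`u^q dx + dμ` with `N ≤ pq/(q-p+1)` forces `u ≡ 0` and `μ ≡ 0`. -/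
theorem liouville_wolff_supersolution (N : ℕ) (p q c : ℝ)
    (hp : 1 < p) (hpN : p < N) (hq : p - 1 < q) (hc : 0 < c)
    (hdim : (N : ℝ) ≤ p * q / (q - p + 1))
    (u : EuclideanSpace ℝ (Fin N) → ℝ) (hu : Measurable u) (hupos : ∀ x, 0 ≤ u x)
    (huq : LocallyIntegrable (fun x => u x ^ q))
    (μ : Measure (EuclideanSpace ℝ (Fin N)))
    (hsup : ∀ x : EuclideanSpace ℝ (Fin N),
      ENNReal.ofReal c *
        (∫⁻ t in Set.Ioi (0 : ℝ),
          (((∫⁻ y in Metric.ball x t, ENNReal.ofReal (u y ^ q)) + μ (Metric.ball x t)) /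
              ENNReal.ofReal (t ^ ((N : ℝ) - p))) ^ (1 / (p - 1)) *
            ENNReal.ofReal t⁻¹) ≤ ENNReal.ofReal (u x)) :
    (∀ᵐ x : EuclideanSpace ℝ (Fin N), u x = 0) ∧ μ = 0 :=
  liouville_wolff_supersolution_general N p q c hp hpN hq hc hdim u hu hupos μ hsup
end

section
/- Let ω be a nonnegative locally finite measure on ℝ^N, P: [0,∞) → [0,∞) a nondecreasing function, q > 0, K a nonnegative function on ℝ^N, and suppose P(c K(x)) dx ≤ dω as measures. If M_ω denotes the centered Hardy–Littlewood maximal operator with respect to ω and P satisfies P(θ^{1/(p−1)} r) ≤ θ^{q} P(r) for 0 ≤ θ ≤ 1 (as holds for P = P_{l,a,β} with q = lβ/(p−1)), then for every Borel set E: ∫_{ℝ^N} P(c (M_ω χ_E)^{1/(p−1)} K) dx ≤ ∫_{ℝ^N} (M_ω χ_E)^q dω ≤ C ω(E), where C depends only on N and q (boundedness of M_ω on L^s(dω), s > 1, by Fefferman's theorem). -/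
open MeasureTheory ENNReal

/-- Centered Hardy–Littlewood maximal function of `χ_E` with respect to `ω`. -/
noncomputable def maxOp (N : ℕ) (ω : Measure (EuclideanSpace ℝ (Fin N)))
    (E : Set (EuclideanSpace ℝ (Fin N))) (x : EuclideanSpace ℝ (Fin N)) : ℝ≥0∞ :=
  ⨆ (t : ℝ) (_ : 0 < t), ω (E ∩ Metric.ball x t) / ω (Metric.ball x t)

/-!
Since `M_ω χ_E ≤ 1`, the scaling hypothesis on `P` gives pointwise
`P(c (M_ω χ_E)^{1/(p-1)} K) ≤ (M_ω χ_E)^q P(c K)`, and integrating against `P(c K) dx ≤ dω`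
yields the first inequality. For the second, the Besicovitch covering theorem gives the weak-type
bound `λ ω{M_ω χ_E > λ} ≤ N_B ω(E)` with `N_B` depending only on the dimension; summing it over
the dyadic level sets `{M_ω χ_E > 2^{-n-1}}` weighted by `2^{-nq}` gives a geometric series with
ratio `2^{1-q} < 1`.
-/

open Metric Set

theorem lintegral_mul_le_lintegral_of_setLIntegral_le {α : Type*} [MeasurableSpace α]
    {μ ν : Measure α} {g : α → ℝ≥0∞}
    (hg : ∀ A, MeasurableSet A → ∫⁻ x in A, g x ∂μ ≤ ν A) {f : α → ℝ≥0∞} (hf : Measurable f)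
    (hf_top : ∀ x, f x ≠ ∞) :
    ∫⁻ x, f x * g x ∂μ ≤ ∫⁻ x, f x ∂ν := by
  -- `g` need not be measurable: replace `f * g` by a measurable minorant `h` with the same
  -- integral and use the measurable density `h / f ≤ g`.
  obtain ⟨h, hh_meas, hh_le, hh_eq⟩ := exists_measurable_le_lintegral_eq μ (fun x => f x * g x)
  have hh_zero : ∀ x, f x = 0 → h x = 0 := fun x hx => by simpa [hx] using hh_le x
  have hfh : ∀ x, f x * (h x / f x) = h x := fun x => by
    rcases eq_or_ne (f x) 0 with hx | hx
    · simp [hx, hh_zero x hx]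
    · exact ENNReal.mul_div_cancel hx (hf_top x)
  have hdens : μ.withDensity (fun x => h x / f x) ≤ ν := by
    refine Measure.le_iff.2 fun A hA => ?_
    rw [withDensity_apply _ hA]
    refine le_trans (setLIntegral_mono' hA fun x _ => ?_) (hg A hA)
    rcases eq_or_ne (f x) 0 with hx | hx
    · simp [hx, hh_zero x hx]
    · exact ENNReal.div_le_of_le_mul' (hh_le x)
  calc ∫⁻ x, f x * g x ∂μ = ∫⁻ x, h x / f x * f x ∂μ := by
        simp only [hh_eq, mul_comm _ (f _), hfh]
    _ = ∫⁻ x, f x ∂μ.withDensity (fun x => h x / f x) :=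
      (lintegral_withDensity_eq_lintegral_mul _ (hh_meas.div hf) hf).symm
    _ ≤ ∫⁻ x, f x ∂ν := lintegral_mono' hdens le_rfl

theorem ENNReal.exists_inv_two_pow_lt_le {y : ℝ≥0∞} (h0 : y ≠ 0) (h1 : y ≤ 1) :
    ∃ n : ℕ, 2⁻¹ ^ (n + 1) < y ∧ y ≤ 2⁻¹ ^ n := by
  lift y to NNReal using ne_top_of_le_ne_top one_ne_top h1
  obtain ⟨n, hn⟩ := exists_nat_pow_near_of_lt_one (pos_iff_ne_zero.2 (by exact_mod_cast h0))
    (by exact_mod_cast h1) (y := (2⁻¹ : NNReal)) (inv_pos.2 two_pos) (by norm_num)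
  refine ⟨n, ?_⟩
  have h2 : ((2⁻¹ : NNReal) : ℝ≥0∞) = 2⁻¹ := by simp
  rw [← h2]
  exact_mod_cast hn

theorem ENNReal.rpow_le_tsum_ite_inv_two_pow_lt {y : ℝ≥0∞} (hy : y ≤ 1) {q : ℝ} (hq : 0 < q) :
    y ^ q ≤ ∑' n : ℕ, if 2⁻¹ ^ (n + 1) < y then ((2 : ℝ≥0∞)⁻¹ ^ n) ^ q else 0 := by
  rcases eq_or_ne y 0 with rfl | hy0
  · simp [zero_rpow_of_pos hq]
  obtain ⟨n, hlt, hle⟩ := exists_inv_two_pow_lt_le hy0 hy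
  calc y ^ q ≤ (2⁻¹ ^ n) ^ q := rpow_le_rpow hle hq.le
    _ = if 2⁻¹ ^ (n + 1) < y then ((2 : ℝ≥0∞)⁻¹ ^ n) ^ q else 0 := (if_pos hlt).symm
    _ ≤ _ := ENNReal.le_tsum n

theorem lintegral_rpow_le_of_mul_measure_lt_le {α : Type*} [MeasurableSpace α] {ω : Measure α}
    {f : α → ℝ≥0∞} (hf : Measurable f) (hf1 : ∀ x, f x ≤ 1) {q : ℝ} (hq : 0 < q) {A : ℝ≥0∞}
    (hweak : ∀ l, 0 < l → l * ω {x | l < f x} ≤ A) :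
    ∫⁻ x, f x ^ q ∂ω ≤ 2 * (1 - 2 * 2⁻¹ ^ q)⁻¹ * A := by
  have hmeas : ∀ n : ℕ, MeasurableSet {x | 2⁻¹ ^ (n + 1) < f x} := fun n =>
    measurableSet_lt measurable_const hf
  have hlevel : ∀ n : ℕ, ((2 : ℝ≥0∞)⁻¹ ^ n) ^ q * ω {x | 2⁻¹ ^ (n + 1) < f x} ≤
      2 * (2 * 2⁻¹ ^ q) ^ n * A := fun n => by
    have hcancel : (2 : ℝ≥0∞) ^ (n + 1) * 2⁻¹ ^ (n + 1) = 1 := by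
      rw [← mul_pow, ENNReal.mul_inv_cancel two_ne_zero ofNat_ne_top, one_pow]
    calc ((2 : ℝ≥0∞)⁻¹ ^ n) ^ q * ω {x | 2⁻¹ ^ (n + 1) < f x}
        = (2⁻¹ ^ q) ^ n * 2 ^ (n + 1) * (2⁻¹ ^ (n + 1) * ω {x | 2⁻¹ ^ (n + 1) < f x}) := by
          rw [← rpow_natCast_mul, mul_comm (n : ℝ), rpow_mul_natCast, mul_assoc,
            ← mul_assoc _ _ (ω _), hcancel, one_mul]
      _ ≤ (2⁻¹ ^ q) ^ n * 2 ^ (n + 1) * A := by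
          gcongr; exact hweak _ (ENNReal.pow_pos (ENNReal.inv_pos.2 ofNat_ne_top) _)
      _ = 2 * (2 * 2⁻¹ ^ q) ^ n * A := by ring
  calc ∫⁻ x, f x ^ q ∂ω
      ≤ ∫⁻ x, ∑' n : ℕ, {x | 2⁻¹ ^ (n + 1) < f x}.indicator (fun _ => (2⁻¹ ^ n) ^ q) x ∂ω :=
        lintegral_mono fun x => by
          simpa only [indicator_apply, mem_ofPred_eq] using
            ENNReal.rpow_le_tsum_ite_inv_two_pow_lt (hf1 x) hq
    _ = ∑' n : ℕ, ((2 : ℝ≥0∞)⁻¹ ^ n) ^ q * ω {x | 2⁻¹ ^ (n + 1) < f x} := by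
        rw [lintegral_tsum fun n => (measurable_const.indicator (hmeas n)).aemeasurable]
        simp only [lintegral_indicator_const (hmeas _)]
    _ ≤ ∑' n : ℕ, 2 * (2 * 2⁻¹ ^ q) ^ n * A := ENNReal.tsum_le_tsum hlevel
    _ = 2 * (1 - 2 * 2⁻¹ ^ q)⁻¹ * A := by
        rw [ENNReal.tsum_mul_right, ENNReal.tsum_mul_left, ENNReal.tsum_geometric]

theorem Besicovitch.mul_measure_le_of_forall_lt_measure_inter_div {α : Type*} [MetricSpace α]
    [MeasurableSpace α] [OpensMeasurableSpace α] {Nb : ℕ} {τ : ℝ} (hτ : 1 < τ)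
    (hsat : IsEmpty (SatelliteConfig α Nb τ)) {ω : Measure α} [SFinite ω] {E S : Set α}
    (hE : MeasurableSet E) {l : ℝ≥0∞} {R : ℝ}
    (hS : ∀ x ∈ S, ∃ t ∈ Ioc 0 R, l < ω (E ∩ ball x t) / ω (ball x t)) :
    l * ω S ≤ Nb * ω E := by
  choose! r hr hlt using hS
  have hball : ∀ x ∈ S, 0 < ω (ball x (r x)) ∧ l * ω (ball x (r x)) ≤ ω (E ∩ ball x (r x)) := by
    intro x hx
    refine ⟨pos_iff_ne_zero.2 fun h0 => ?_, mul_le_of_le_div (hlt x hx).le⟩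
    have := hlt x hx
    rw [h0, measure_mono_null inter_subset_right h0, ENNReal.zero_div] at this
    exact ENNReal.not_lt_zero this
  let pkg : BallPackage S α :=
    { c := Subtype.val
      r := fun x => r x
      rpos := fun x => (hr x x.2).1
      r_bound := R
      r_le := fun x => (hr x x.2).2 }
  obtain ⟨s, hdisj, hcover⟩ := exist_disjoint_covering_families hτ hsat pkg
  have hfamily : ∀ i, l * ω (⋃ j ∈ s i, ball (j : α) (r j)) ≤ ω E := by
    intro i
    -- disjoint balls of positive measure
    have hcount : (s i).Countable := by
      have := Measure.countable_meas_pos_of_disjoint_iUnion (μ := ω)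
        (fun j : s i => measurableSet_closedBall (x := ((j : S) : α)) (ε := r j))
        fun j k hjk => hdisj i j.2 k.2 (Subtype.coe_ne_coe.2 hjk)
      exact countable_coe_iff.1 <| countable_univ_iff.1 <| this.mono fun j _ =>
        (hball _ j.1.2).1.trans_le (measure_mono ball_subset_closedBall)
    calc l * ω (⋃ j ∈ s i, ball (j : α) (r j))
        ≤ ∑' j : s i, l * ω (ball (j : α) (r j)) := by
          rw [ENNReal.tsum_mul_left]; gcongr; exact measure_biUnion_le ω hcount _
      _ ≤ ∑' j : s i, ω (E ∩ ball (j : α) (r j)) :=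
          ENNReal.tsum_le_tsum fun j => (hball _ j.1.2).2
      _ = ω (⋃ j ∈ s i, E ∩ ball (j : α) (r j)) :=
          (measure_biUnion hcount (fun j hj k hk hjk =>
            (hdisj i hj hk hjk).mono (inter_subset_right.trans ball_subset_closedBall)
              (inter_subset_right.trans ball_subset_closedBall))
            fun j _ => hE.inter measurableSet_ball).symm
      _ ≤ ω E := measure_mono (iUnion₂_subset fun _ _ => inter_subset_left)
  have hS : S ⊆ ⋃ i, ⋃ j ∈ s i, ball (j : α) (r j) := by
    simpa [pkg] using hcover
  calc l * ω S ≤ ∑ i, l * ω (⋃ j ∈ s i, ball (j : α) (r j)) := by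
        rw [← Finset.mul_sum]
        gcongr
        exact (measure_mono hS).trans (measure_iUnion_fintype_le _ _)
    _ ≤ ∑ _i : Fin Nb, ω E := Finset.sum_le_sum fun i _ => hfamily i
    _ = Nb * ω E := by simp

section

variable {N : ℕ} {ω : Measure (EuclideanSpace ℝ (Fin N))} {E : Set (EuclideanSpace ℝ (Fin N))}

theorem maxOp_le_one (x : EuclideanSpace ℝ (Fin N)) : maxOp N ω E x ≤ 1 :=
  iSup₂_le fun _ _ =>
    ENNReal.div_le_of_le_mul (by rw [one_mul]; exact measure_mono inter_subset_right)

theorem maxOp_eq_iSup_rat (x : EuclideanSpace ℝ (Fin N)) :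
    maxOp N ω E x = ⨆ (s : ℚ) (_ : 0 < s), ω (E ∩ ball x s) / ω (ball x s) := by
  refine le_antisymm (iSup₂_le fun t ht => ?_)
    (iSup₂_le fun s hs => le_iSup₂_of_le (s : ℝ) (by exact_mod_cast hs) le_rfl)
  have hunion : E ∩ ball x t = ⋃ s : {s : ℚ // 0 < s ∧ (s : ℝ) < t}, E ∩ ball x s := by
    ext y
    simp only [mem_iUnion, mem_inter_iff, mem_ball]
    refine ⟨fun ⟨hyE, hyt⟩ => ?_, fun ⟨s, hyE, hys⟩ => ⟨hyE, hys.trans s.2.2⟩⟩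
    obtain ⟨s, hys, hst⟩ := exists_rat_btwn hyt
    exact ⟨⟨s, by exact_mod_cast dist_nonneg.trans_lt hys, hst⟩, hyE, hys⟩
  have hdir : Directed (· ⊆ ·) fun s : {s : ℚ // 0 < s ∧ (s : ℝ) < t} => E ∩ ball x s :=
    fun a b => by
      rcases le_total (a : ℚ) b with h | h
      · exact ⟨b, inter_subset_inter_right _ (ball_subset_ball (by exact_mod_cast h)), subset_rfl⟩
      · exact ⟨a, subset_rfl, inter_subset_inter_right _ (ball_subset_ball (by exact_mod_cast h))⟩
  rw [hunion, hdir.measure_iUnion, ENNReal.iSup_div]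
  refine iSup_le fun s => le_iSup₂_of_le s.1 s.2.1 ?_
  exact ENNReal.div_le_div_left (measure_mono (ball_subset_ball s.2.2.le)) _

theorem measurable_measure_inter_ball [SFinite ω] (hE : MeasurableSet E) (t : ℝ) :
    Measurable fun x => ω (E ∩ ball x t) :=
  measurable_measure_prodMk_left (s := {p : _ × _ | p.2 ∈ E ∧ dist p.2 p.1 < t})
    ((measurable_snd hE).inter
      (measurableSet_lt (continuous_snd.dist continuous_fst).measurable measurable_const))

theorem measurable_maxOp [SFinite ω] (hE : MeasurableSet E) : Measurable (maxOp N ω E) := by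
  rw [funext maxOp_eq_iSup_rat]
  refine .iSup fun s => .iSup fun _ => (measurable_measure_inter_ball hE s).div ?_
  simpa using measurable_measure_inter_ball (ω := ω) MeasurableSet.univ s

theorem mul_measure_lt_maxOp_le [SFinite ω] (hE : MeasurableSet E) {Nb : ℕ} {τ : ℝ} (hτ : 1 < τ)
    (hsat : IsEmpty (Besicovitch.SatelliteConfig (EuclideanSpace ℝ (Fin N)) Nb τ)) (l : ℝ≥0∞) :
    l * ω {x | l < maxOp N ω E x} ≤ Nb * ω E := by
  set S : ℕ → Set (EuclideanSpace ℝ (Fin N)) := fun m =>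
    {x | ∃ t ∈ Ioc 0 (m : ℝ), l < ω (E ∩ ball x t) / ω (ball x t)}
  have hS : {x | l < maxOp N ω E x} = ⋃ m, S m := by
    ext x
    simp only [maxOp, mem_ofPred_eq, lt_iSup_iff, mem_iUnion, S]
    refine ⟨fun ⟨t, ht, hlt⟩ => ?_, fun ⟨m, t, ht, hlt⟩ => ⟨t, ht.1, hlt⟩⟩
    obtain ⟨m, hm⟩ := exists_nat_ge t
    exact ⟨m, t, ⟨ht, hm⟩, hlt⟩
  have hmono : Monotone S := fun m m' hm x ⟨t, ht, hlt⟩ =>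
    ⟨t, ⟨ht.1, ht.2.trans (by exact_mod_cast hm)⟩, hlt⟩
  rw [hS, hmono.measure_iUnion, ENNReal.mul_iSup]
  exact iSup_le fun m => Besicovitch.mul_measure_le_of_forall_lt_measure_inter_div hτ hsat hE
    fun x hx => hx

end

theorem ENNReal.two_mul_inv_two_rpow_lt_one {q : ℝ} (hq : 1 < q) : 2 * (2 : ℝ≥0∞)⁻¹ ^ q < 1 :=
  calc 2 * (2 : ℝ≥0∞)⁻¹ ^ q < 2 * 2⁻¹ := by
        gcongr
        · exact ofNat_ne_top
        · simpa using rpow_lt_rpow_of_exponent_gt (ENNReal.inv_pos.2 ofNat_ne_top)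
            (ENNReal.inv_lt_one.2 one_lt_two) hq
    _ = 1 := ENNReal.mul_inv_cancel two_ne_zero ofNat_ne_top

theorem ofReal_apply_rpow_mul_le {P : ℝ → ℝ} {s q : ℝ} (hq : 0 ≤ q)
    (hP : ∀ θ r : ℝ, 0 ≤ θ → θ ≤ 1 → 0 ≤ r → P (θ ^ s * r) ≤ θ ^ q * P r)
    {m : ℝ≥0∞} (hm : m ≤ 1) {r : ℝ} (hr : 0 ≤ r) :
    ENNReal.ofReal (P (m.toReal ^ s * r)) ≤ m ^ q * ENNReal.ofReal (P r) := by
  have hm_top : m ^ q ≠ ∞ := rpow_ne_top_of_nonneg hq (ne_top_of_le_ne_top one_ne_top hm)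
  calc ENNReal.ofReal (P (m.toReal ^ s * r))
      ≤ ENNReal.ofReal (m.toReal ^ q * P r) :=
        ofReal_le_ofReal (hP _ r toReal_nonneg (toReal_le_of_le_ofReal zero_le_one
          (by simpa using hm)) hr)
    _ = m ^ q * ENNReal.ofReal (P r) := by
        rw [ofReal_mul (by positivity), toReal_rpow, ofReal_toReal hm_top]

theorem maximal_function_capacity_estimate_general (N : ℕ) (p q : ℝ)
    (hq : 1 < q) :
    ∃ C : ℝ, 0 < C ∧
      ∀ (ω : Measure (EuclideanSpace ℝ (Fin N))), IsLocallyFiniteMeasure ω →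
      ∀ (P : ℝ → ℝ), MonotoneOn P (Set.Ici (0 : ℝ)) → (∀ r : ℝ, 0 ≤ r → 0 ≤ P r) →
        (∀ θ r : ℝ, 0 ≤ θ → θ ≤ 1 → 0 ≤ r →
          P (θ ^ (1 / (p - 1)) * r) ≤ θ ^ q * P r) →
      ∀ (K : EuclideanSpace ℝ (Fin N) → ℝ) (c : ℝ), 0 < c → (∀ x, 0 ≤ K x) →
        (∀ A : Set (EuclideanSpace ℝ (Fin N)), MeasurableSet A →
          ∫⁻ x in A, ENNReal.ofReal (P (c * K x)) ≤ ω A) →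
      ∀ E : Set (EuclideanSpace ℝ (Fin N)), MeasurableSet E →
        (∫⁻ x, ENNReal.ofReal
            (P (c * ((maxOp N ω E x).toReal) ^ (1 / (p - 1)) * K x)) ≤
          ∫⁻ x, (maxOp N ω E x) ^ q ∂ω) ∧
        (∫⁻ x, (maxOp N ω E x) ^ q ∂ω ≤ ENNReal.ofReal C * ω E) := by
  obtain ⟨Nb, τ, hτ, hsat⟩ :=
    HasBesicovitchCovering.no_satelliteConfig (α := EuclideanSpace ℝ (Fin N))
  have hq0 : 0 < q := zero_lt_one.trans hq
  set C : ℝ≥0∞ := 2 * (1 - 2 * 2⁻¹ ^ q)⁻¹ * Nb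
  have hC : C ≠ ∞ := by
    have := (tsub_pos_of_lt (ENNReal.two_mul_inv_two_rpow_lt_one hq)).ne'
    finiteness
  refine ⟨C.toReal + 1, by positivity, fun ω _ P _ _ hP K c hc hK hPK E hE => ⟨?_, ?_⟩⟩
  · calc ∫⁻ x, ENNReal.ofReal (P (c * (maxOp N ω E x).toReal ^ (1 / (p - 1)) * K x))
        ≤ ∫⁻ x, maxOp N ω E x ^ q * ENNReal.ofReal (P (c * K x)) := lintegral_mono fun x => by
          rw [show c * (maxOp N ω E x).toReal ^ (1 / (p - 1)) * K x =
            (maxOp N ω E x).toReal ^ (1 / (p - 1)) * (c * K x) by ring]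
          exact ofReal_apply_rpow_mul_le hq0.le hP (maxOp_le_one x) (by have := hK x; positivity)
      _ ≤ ∫⁻ x, maxOp N ω E x ^ q ∂ω :=
          lintegral_mul_le_lintegral_of_setLIntegral_le hPK ((measurable_maxOp hE).pow_const q)
            fun x => rpow_ne_top_of_nonneg hq0.le (ne_top_of_le_ne_top one_ne_top (maxOp_le_one x))
  · calc ∫⁻ x, maxOp N ω E x ^ q ∂ω ≤ 2 * (1 - 2 * 2⁻¹ ^ q)⁻¹ * (Nb * ω E) :=
          lintegral_rpow_le_of_mul_measure_lt_le (measurable_maxOp hE) maxOp_le_one hq0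
            fun l _ => mul_measure_lt_maxOp_le hE hτ hsat l
      _ = ENNReal.ofReal C.toReal * ω E := by rw [ofReal_toReal hC]; ring
      _ ≤ ENNReal.ofReal (C.toReal + 1) * ω E := by gcongr; linarith

theorem maximal_function_capacity_estimate (N : ℕ) (p q : ℝ)
    (hp : 1 < p) (hq : 1 < q) :
    ∃ C : ℝ, 0 < C ∧
      ∀ (ω : Measure (EuclideanSpace ℝ (Fin N))), IsLocallyFiniteMeasure ω →
      ∀ (P : ℝ → ℝ), MonotoneOn P (Set.Ici (0 : ℝ)) → (∀ r : ℝ, 0 ≤ r → 0 ≤ P r) →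
        (∀ θ r : ℝ, 0 ≤ θ → θ ≤ 1 → 0 ≤ r →
          P (θ ^ (1 / (p - 1)) * r) ≤ θ ^ q * P r) →
      ∀ (K : EuclideanSpace ℝ (Fin N) → ℝ) (c : ℝ), 0 < c → (∀ x, 0 ≤ K x) →
        (∀ A : Set (EuclideanSpace ℝ (Fin N)), MeasurableSet A →
          ∫⁻ x in A, ENNReal.ofReal (P (c * K x)) ≤ ω A) →
      ∀ E : Set (EuclideanSpace ℝ (Fin N)), MeasurableSet E →
        (∫⁻ x, ENNReal.ofReal
            (P (c * ((maxOp N ω E x).toReal) ^ (1 / (p - 1)) * K x)) ≤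
          ∫⁻ x, (maxOp N ω E x) ^ q ∂ω) ∧
        (∫⁻ x, (maxOp N ω E x) ^ q ∂ω ≤ ENNReal.ofReal C * ω E) :=
  maximal_function_capacity_estimate_general N p q hq
end
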